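/- arXiv:1602.07593 — 7 statements merged into one kernel-verified Lean document; each statement's English description precedes it below -/
import Mathlib

section
/- For integers n, s, z, y with 1 ≤ s ≤ n, 0 ≤ z ≤ s-2, 0 ≤ y ≤ z, the sum over ℓ from z-y+1 to s-y of C(n-1, ℓ-1) · C(n-ℓ-1, n-s-1) · (n-ℓ) · C(ℓ-1, z-y) · C(s-ℓ, y) · (-1)^(ℓ+2y-z-1) equals 0. -/
/-- Integer binomial coefficient: `C a b = 0` when `b < 0` or `b > a`. -/
def ichoose (a b : ℤ) : ℤ :=
  if 0 ≤ b ∧ b ≤ a then ((a.toNat).choose b.toNat : ℤ) else 0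

lemma key_q (a c d k j : ℕ) :
    (((a+(k+j)+c+d+1).choose (c+k) : ℚ)) * ((a+j+d).choose a) * (a+j+d+1) * ((c+k).choose c) * ((j+d).choose d)
    = ((a+(k+j)+c+d+1) : ℚ) * ((a+(k+j)+c+d).choose a) * (((k+j)+c+d).choose (k+j)) * ((c+d).choose c) * ((k+j).choose k) := by
  have b1 : c+k ≤ a+(k+j)+c+d+1 := by omega
  have b2 : a ≤ a+j+d := by omega
  have b3 : c ≤ c+k := by omega
  have b4 : d ≤ j+d := by omega
  have b5 : a ≤ a+(k+j)+c+d := by omega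
  have b6 : k+j ≤ (k+j)+c+d := by omega
  have b7 : c ≤ c+d := by omega
  have b8 : k ≤ k+j := by omega
  rw [Nat.cast_choose ℚ b1, Nat.cast_choose ℚ b2, Nat.cast_choose ℚ b3,
    Nat.cast_choose ℚ b4, Nat.cast_choose ℚ b5, Nat.cast_choose ℚ b6,
    Nat.cast_choose ℚ b7, Nat.cast_choose ℚ b8]
  have s1 : a+(k+j)+c+d+1-(c+k) = a+j+d+1 := by omega
  have s2 : a+j+d-a = j+d := by omega
  have s3 : c+k-c = k := by omega
  have s4 : j+d-d = j := by omega
  have s5 : a+(k+j)+c+d-a = (k+j)+c+d := by omega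
  have s6 : (k+j)+c+d-(k+j) = c+d := by omega
  have s7 : c+d-c = d := by omega
  have s8 : k+j-k = j := by omega
  rw [s1, s2, s3, s4, s5, s6, s7, s8, Nat.factorial_succ (a+(k+j)+c+d),
    Nat.factorial_succ (a+j+d)]
  push_cast
  field_simp

lemma key_int (a c d k j : ℕ) :
    (((a+(k+j)+c+d+1).choose (c+k) : ℤ)) * ((a+j+d).choose a) * (a+j+d+1) * ((c+k).choose c) * ((j+d).choose d)
    = ((a+(k+j)+c+d+1) : ℤ) * ((a+(k+j)+c+d).choose a) * (((k+j)+c+d).choose (k+j)) * ((c+d).choose c) * ((k+j).choose k) := by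
  exact_mod_cast key_q a c d k j

lemma sum_Icc_int (lo hi : ℤ) (f : ℤ → ℤ) :
    ∑ ℓ ∈ Finset.Icc lo hi, f ℓ = ∑ k ∈ Finset.range (hi + 1 - lo).toNat, f (lo + k) := by
  apply Finset.sum_nbij' (i := fun ℓ => (ℓ - lo).toNat) (j := fun k => lo + (k : ℤ)) <;>
    intros x hx <;>
    simp only [Finset.mem_Icc, Finset.mem_range] at * <;>
    first
      | omega
      | (congr 1; omega)

theorem stmt_0 (n s z y : ℤ) (hs1 : 1 ≤ s) (hsn : s ≤ n) (hz0 : 0 ≤ z)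
    (hzs : z ≤ s - 2) (hy0 : 0 ≤ y) (hyz : y ≤ z) :
    ∑ ℓ ∈ Finset.Icc (z - y + 1) (s - y),
      ichoose (n - 1) (ℓ - 1) * ichoose (n - ℓ - 1) (n - s - 1) * (n - ℓ) *
        ichoose (ℓ - 1) (z - y) * ichoose (s - ℓ) y * (-1) ^ (ℓ + 2 * y - z - 1).toNat
      = 0 := by
  rcases eq_or_lt_of_le hsn with rfl | hlt
  · apply Finset.sum_eq_zero
    intro ℓ _
    have h0 : ichoose (s - ℓ - 1) (s - s - 1) = 0 := by
      simp only [ichoose]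
      rw [if_neg (by omega)]
    rw [h0]
    ring
  · have ha' : 0 ≤ n - s - 1 := by omega
    obtain ⟨a, ha⟩ : ∃ a : ℕ, (a : ℤ) = n - s - 1 := ⟨_, Int.toNat_of_nonneg ha'⟩
    obtain ⟨b, hb⟩ : ∃ b : ℕ, (b : ℤ) = s - z - 1 := ⟨_, Int.toNat_of_nonneg (by omega)⟩
    obtain ⟨c, hc⟩ : ∃ c : ℕ, (c : ℤ) = z - y := ⟨_, Int.toNat_of_nonneg (by omega)⟩
    obtain ⟨d, hd⟩ : ∃ d : ℕ, (d : ℤ) = y := ⟨_, Int.toNat_of_nonneg hy0⟩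
    have hb0 : b ≠ 0 := by omega
    rw [sum_Icc_int]
    have hcard : (s - y + 1 - (z - y + 1)).toNat = b + 1 := by omega
    rw [hcard]
    have hterm : ∀ k ∈ Finset.range (b + 1),
        ichoose (n - 1) (z - y + 1 + (k:ℤ) - 1) *
            ichoose (n - (z - y + 1 + (k:ℤ)) - 1) (n - s - 1) * (n - (z - y + 1 + (k:ℤ))) *
          ichoose (z - y + 1 + (k:ℤ) - 1) (z - y) * ichoose (s - (z - y + 1 + (k:ℤ))) y *
          (-1) ^ (z - y + 1 + (k:ℤ) + 2 * y - z - 1).toNat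
        = ((-1:ℤ)^d * ((a+b+c+d+1) * ((a+b+c+d).choose a) * ((b+c+d).choose b) * ((c+d).choose c)))
            * ((-1:ℤ)^k * (b.choose k : ℤ)) := by
      intro k hk
      rw [Finset.mem_range] at hk
      obtain ⟨j, hj⟩ : ∃ j : ℕ, b = k + j := ⟨b - k, by omega⟩
      subst hj
      have I1 : ichoose (n - 1) (z - y + 1 + (k:ℤ) - 1)
          = (((a+(k+j)+c+d+1).choose (c+k) : ℕ) : ℤ) := by
        simp only [ichoose]
        rw [if_pos ⟨by omega, by omega⟩]
        have e1 : (n - 1).toNat = a+(k+j)+c+d+1 := by omega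
        have e2 : (z - y + 1 + (k:ℤ) - 1).toNat = c + k := by omega
        rw [e1, e2]
      have I2 : ichoose (n - (z - y + 1 + (k:ℤ)) - 1) (n - s - 1)
          = (((a+j+d).choose a : ℕ) : ℤ) := by
        simp only [ichoose]
        rw [if_pos ⟨by omega, by omega⟩]
        have e1 : (n - (z - y + 1 + (k:ℤ)) - 1).toNat = a+j+d := by omega
        have e2 : (n - s - 1).toNat = a := by omega
        rw [e1, e2]
      have I3 : n - (z - y + 1 + (k:ℤ)) = ((a+j+d+1 : ℕ) : ℤ) := by push_cast; omega
      have I4 : ichoose (z - y + 1 + (k:ℤ) - 1) (z - y)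
          = (((c+k).choose c : ℕ) : ℤ) := by
        simp only [ichoose]
        rw [if_pos ⟨by omega, by omega⟩]
        have e1 : (z - y + 1 + (k:ℤ) - 1).toNat = c + k := by omega
        have e2 : (z - y).toNat = c := by omega
        rw [e1, e2]
      have I5 : ichoose (s - (z - y + 1 + (k:ℤ))) y = (((j+d).choose d : ℕ) : ℤ) := by
        simp only [ichoose]
        rw [if_pos ⟨by omega, by omega⟩]
        have e1 : (s - (z - y + 1 + (k:ℤ))).toNat = j+d := by omega
        have e2 : y.toNat = d := by omega
        rw [e1, e2]
      have I6 : (z - y + 1 + (k:ℤ) + 2 * y - z - 1).toNat = k + d := by omega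
      rw [I1, I2, I3, I4, I5, I6, pow_add]
      have K := key_int a c d k j
      push_cast at K ⊢
      linear_combination ((-1:ℤ)^k * (-1)^d) * K
    rw [Finset.sum_congr rfl hterm, ← Finset.mul_sum,
      Int.alternating_sum_range_choose_of_ne hb0, mul_zero]
end

section
/- Let k ≤ n, α ∈ ℝ^k non-increasing with positive entries, and p ∈ ℝ^k a non-increasing, non-negative sequence of VCG payments with p_{k+1} := 0 and α_{k+1} := 0. Suppose for all j ∈ {1,...,k}, either (α_j = α_{j+1} and p_j = p_{j+1}) or the quantity b_{j+1} := (p_j - p_{j+1})/(α_j - α_{j+1}) is well-defined, and these b values form a non-increasing sequence. Then for all j with α_j > 0, p_j/α_j ≥ p_{j+1}/α_{j+1} whenever α_{j+1} > 0; i.e., whenever the α-VCG characterization is satisfiable, the α-GSP characterization (that the sequence p_j/α_j is non-increasing) is also satisfiable. -/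
theorem stmt_7 (k : ℕ) (hk : 1 ≤ k) (α p : ℕ → ℝ)
    (hαpos : ∀ j, 1 ≤ j → j ≤ k → 0 < α j)
    (hαmono : ∀ j, 1 ≤ j → j < k → α (j + 1) ≤ α j)
    (hαend : α (k + 1) = 0) (hpend : p (k + 1) = 0)
    (hpnn : ∀ j, 1 ≤ j → j ≤ k → 0 ≤ p j)
    (hpmono : ∀ j, 1 ≤ j → j < k → p (j + 1) ≤ p j)
    (hcase : ∀ j, 1 ≤ j → j ≤ k →
      (α j = α (j + 1) ∧ p j = p (j + 1)) ∨ α (j + 1) < α j)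
    (hbmono : ∀ i j, 1 ≤ i → i ≤ j → j ≤ k →
      α (i + 1) < α i → α (j + 1) < α j →
      (p j - p (j + 1)) / (α j - α (j + 1)) ≤ (p i - p (i + 1)) / (α i - α (i + 1))) :
    ∀ j, 1 ≤ j → j ≤ k → 0 < α j → 0 < α (j + 1) →
      p (j + 1) / α (j + 1) ≤ p j / α j := by
  intro j hj1 hjk hαj hαj1
  rcases hcase j hj1 hjk with ⟨hae, hpe⟩ | hlt
  · rw [hae, hpe]
  -- key: b := ratio at j, and p (m+1) ≤ b * α (m+1) for all j ≤ m ≤ k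
  set b : ℝ := (p j - p (j + 1)) / (α j - α (j + 1)) with hb
  have hd : 0 < α j - α (j + 1) := by linarith
  have key : ∀ d m, j ≤ m → m ≤ k → k - m = d → p (m + 1) ≤ b * α (m + 1) := by
    intro d
    induction d with
    | zero =>
      intro m hjm hmk hdm
      have : m = k := le_antisymm hmk (Nat.le_of_sub_eq_zero hdm)
      subst this
      rw [hαend, hpend, mul_zero]
    | succ d ih =>
      intro m hjm hmk hdm
      have hmk' : m < k := by omega
      have hrec : p (m + 1 + 1) ≤ b * α (m + 1 + 1) := ih (m + 1) (by omega) (by omega) (by omega)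
      rcases hcase (m + 1) (by omega) (by omega) with ⟨hae, hpe⟩ | hlt'
      · rw [hae, hpe]; exact hrec
      · have hbm := hbmono j (m + 1) hj1 (by omega) (by omega) hlt hlt'
        rw [← hb] at hbm
        have hd' : 0 < α (m + 1) - α (m + 1 + 1) := by linarith
        have heq : p (m + 1) - p (m + 1 + 1) =
            ((p (m + 1) - p (m + 1 + 1)) / (α (m + 1) - α (m + 1 + 1))) *
              (α (m + 1) - α (m + 1 + 1)) := by
          field_simp
        nlinarith [mul_le_mul_of_nonneg_right hbm (le_of_lt hd')]
  have hjk' : j < k := by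
    rcases lt_or_eq_of_le hjk with h | h
    · exact h
    · subst h; rw [hαend] at hαj1; linarith
  have hkey := key (k - (j + 1) + 1) j le_rfl hjk (by omega)
  have heq : p j - p (j + 1) = b * (α j - α (j + 1)) := by
    rw [hb]; field_simp
  rw [div_le_div_iff₀ hαj1 hαj]
  nlinarith [mul_le_mul_of_nonneg_right hkey (le_of_lt hd)]
end

section
/- Define b^F(v) = ((2/3)v³ - (4/3)β₂v³ + β₂v²) / (v² - 2α₂v² + 2α₂v) for v ∈ (0,1] and b^F(0) = 0, where α₂, β₂ ∈ (0,1]. Then b^F is increasing on [0,1] if and only if β₂ ≤ 1/2 or α₂ ≥ (2β₂ - 1)/(2 - β₂). -/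
/-!
On `(0, 1]` the factor `v` cancels, so `b^F` is the quotient `(a v² + b v) / (c v + d)` with
`c v + d > 0` on `[0, 1]`, whose derivative has numerator `G v = a (c v² + 2 d v) + b d`. Since
`c v² + 2 d v` increases from `0` to `c + 2 d` on `[0, 1]`, `G v` is a convex combination of
`G 0 = b d > 0` and `G 1` with positive weight on `G 0` when `v < 1`. Hence the quotient is
strictly increasing iff `G 1 ≥ 0`: sufficiency from `G > 0` on `(0, 1)`, necessity because a
monotone function has nonnegative one-sided derivative at `1`. For the bid function,
`G 1 = (2/3) (α₂ (2 - β₂) - (2 β₂ - 1))`.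
-/

open Set

section QuadraticDivLinear

variable {a b c d : ℝ}

theorem hasDerivAt_quadratic_div_linear {v : ℝ} (hv : c * v + d ≠ 0) :
    HasDerivAt (fun v => (a * v ^ 2 + b * v) / (c * v + d))
      ((a * c * v ^ 2 + 2 * a * d * v + b * d) / (c * v + d) ^ 2) v := by
  have hnum : HasDerivAt (fun v : ℝ => a * v ^ 2 + b * v) (2 * a * v + b) v :=
    (((hasDerivAt_pow 2 v).const_mul a).add ((hasDerivAt_id v).const_mul b)).congr_deriv (by ring)
  have hden : HasDerivAt (fun v : ℝ => c * v + d) c v := by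
    simpa using ((hasDerivAt_id v).const_mul c).add_const d
  exact (hnum.div hden hv).congr_deriv (by ring)

theorem linear_pos_of_mem_Icc (hd : 0 < d) (hcd : 0 < c + d) {v : ℝ} (hv : v ∈ Icc (0 : ℝ) 1) :
    0 < c * v + d := by
  nlinarith [mul_nonneg hv.1 hcd.le, mul_nonneg (sub_nonneg.2 hv.2) hd.le]

theorem quadratic_numerator_pos (hb : 0 < b) (hd : 0 < d) (hcd : 0 < c + d)
    (h₁ : 0 ≤ a * c + 2 * a * d + b * d) {v : ℝ} (hv : v ∈ Ico (0 : ℝ) 1) :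
    0 < a * c * v ^ 2 + 2 * a * d * v + b * d := by
  have hden := linear_pos_of_mem_Icc hd hcd ⟨hv.1, hv.2.le⟩
  have hh : 0 ≤ c * v ^ 2 + 2 * d * v := by nlinarith [hv.1]
  have hgap : 0 < (c + 2 * d) - (c * v ^ 2 + 2 * d * v) := by nlinarith [hv.2]
  -- `(c + 2d) G v = ((c + 2d) - h v) G 0 + h v G 1` with `h v = c v² + 2 d v`
  nlinarith [mul_pos hgap (mul_pos hb hd), mul_nonneg hh h₁]

theorem strictMonoOn_quadratic_div_linear_iff (hb : 0 < b) (hd : 0 < d) (hcd : 0 < c + d) :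
    StrictMonoOn (fun v => (a * v ^ 2 + b * v) / (c * v + d)) (Icc 0 1) ↔
      0 ≤ a * c + 2 * a * d + b * d := by
  have hderiv : ∀ v ∈ Icc (0 : ℝ) 1, HasDerivAt (fun v => (a * v ^ 2 + b * v) / (c * v + d))
      ((a * c * v ^ 2 + 2 * a * d * v + b * d) / (c * v + d) ^ 2) v :=
    fun v hv => hasDerivAt_quadratic_div_linear (linear_pos_of_mem_Icc hd hcd hv).ne'
  have hone : (1 : ℝ) ∈ Icc 0 1 := right_mem_Icc.2 zero_le_one
  constructor
  · intro hmono
    have hslope := hmono.monotoneOn.derivWithin_nonneg (x := 1)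
    rw [((hderiv 1 hone).hasDerivWithinAt).derivWithin (uniqueDiffOn_Icc zero_lt_one 1 hone)]
      at hslope
    simp only [one_pow, mul_one] at hslope
    rwa [le_div_iff₀ (pow_pos hcd 2), zero_mul] at hslope
  · intro h₁
    refine strictMonoOn_of_deriv_pos (convex_Icc 0 1)
      (fun v hv => (hderiv v hv).continuousAt.continuousWithinAt) fun v hv => ?_
    rw [interior_Icc] at hv
    rw [(hderiv v (Ioo_subset_Icc_self hv)).deriv]
    exact div_pos (quadratic_numerator_pos hb hd hcd h₁ (Ioo_subset_Ico_self hv))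
      (pow_pos (linear_pos_of_mem_Icc hd hcd (Ioo_subset_Icc_self hv)) 2)

theorem eqOn_quadratic_div_linear_of_cancel {f : ℝ → ℝ}
    (hf : ∀ v ∈ Ioc (0 : ℝ) 1, f v = (a * v ^ 3 + b * v ^ 2) / (c * v ^ 2 + d * v)) (hf0 : f 0 = 0) :
    EqOn f (fun v => (a * v ^ 2 + b * v) / (c * v + d)) (Icc 0 1) := by
  intro v hv
  rcases hv.1.eq_or_lt with rfl | hv0
  · simp [hf0]
  · dsimp only
    rw [hf v ⟨hv0, hv.2⟩, ← mul_div_mul_left (a * v ^ 2 + b * v) (c * v + d) hv0.ne']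
    congr 1 <;> ring

end QuadraticDivLinear

theorem bid_derivative_at_one_nonneg_iff {α β : ℝ} (hα : 0 < α) (hβ : β < 2) :
    0 ≤ (2 / 3 - 4 / 3 * β) * (1 - 2 * α) + 2 * (2 / 3 - 4 / 3 * β) * (2 * α) + β * (2 * α) ↔
      β ≤ 1 / 2 ∨ α ≥ (2 * β - 1) / (2 - β) := by
  rw [ge_iff_le, div_le_iff₀ (by linarith)]
  constructor
  · intro h
    right
    linarith
  · rintro (h | h) <;> nlinarith

theorem stmt_10 (α₂ β₂ : ℝ) (hα : α₂ ∈ Set.Ioc (0 : ℝ) 1) (hβ : β₂ ∈ Set.Ioc (0 : ℝ) 1)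
    (bF : ℝ → ℝ)
    (hbF : ∀ v : ℝ, v ∈ Set.Ioc (0 : ℝ) 1 →
      bF v = ((2 / 3) * v ^ 3 - (4 / 3) * β₂ * v ^ 3 + β₂ * v ^ 2) /
        (v ^ 2 - 2 * α₂ * v ^ 2 + 2 * α₂ * v))
    (hbF0 : bF 0 = 0) :
    StrictMonoOn bF (Set.Icc 0 1) ↔ β₂ ≤ 1 / 2 ∨ α₂ ≥ (2 * β₂ - 1) / (2 - β₂) := by
  obtain ⟨hα₀, -⟩ := hα
  obtain ⟨hβ₀, hβ₁⟩ := hβ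
  have hcancel : EqOn bF (fun v => ((2 / 3 - 4 / 3 * β₂) * v ^ 2 + β₂ * v) /
      ((1 - 2 * α₂) * v + 2 * α₂)) (Icc 0 1) :=
    eqOn_quadratic_div_linear_of_cancel (fun v hv => by rw [hbF v hv]; congr 1 <;> ring) hbF0
  rw [hcancel.congr_strictMonoOn,
    strictMonoOn_quadratic_div_linear_iff hβ₀ (by positivity) (by linarith)]
  exact bid_derivative_at_one_nonneg_iff hα₀ (by linarith)
end

section
/- Define b^V(v) = (2v² - 4β₂v² + 2β₂v) / (2v - 4α₂v + 2α₂) for v ∈ [0,1) where α₂, β₂ ∈ (0,1]. Then b^V is increasing on [0,1) if and only if β₂ ≤ 1/2 or α₂ ≥ 2 - 1/β₂. -/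
lemma den_pos (α v : ℝ) (hα : 0 < α) (hα1 : α ≤ 1) (hv0 : 0 ≤ v) (hv1 : v < 1) :
    0 < 2 * v - 4 * α * v + 2 * α := by
  nlinarith [mul_pos hα (sub_pos.2 hv1), mul_nonneg hv0 (sub_nonneg.2 hα1)]

lemma key_pos (α β x y : ℝ) (hα : 0 < α) (hα1 : α ≤ 1) (hβ : 0 < β)
    (hx : 0 ≤ x) (hy : y < 1) (hxy : x < y)
    (hC : β ≤ 1 / 2 ∨ α ≥ 2 - 1 / β) :
    0 < (1 - 2*β) * (1 - 2*α) * x * y + α * (1 - 2*β) * (x + y) + α * β := by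
  have hy0 : 0 ≤ y := le_of_lt (lt_of_le_of_lt hx hxy)
  have hx1 : x < 1 := lt_trans hxy hy
  have hK0 : 0 ≤ x*y + α*(x*(1-y) + y*(1-x)) := by
    have h1 : 0 ≤ x*y := mul_nonneg hx hy0
    have h2 : 0 ≤ x*(1-y) := mul_nonneg hx (by linarith)
    have h3 : 0 ≤ y*(1-x) := mul_nonneg hy0 (by linarith)
    nlinarith [mul_nonneg hα.le (add_nonneg h2 h3)]
  have hK1 : x*y + α*(x*(1-y) + y*(1-x)) < 1 := by
    have h1 : 0 ≤ (1-α)*(1-x*y) := mul_nonneg (by linarith) (by nlinarith)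
    have h2 : 0 < α*((1-x)*(1-y)) := mul_pos hα (mul_pos (by linarith) (by linarith))
    nlinarith
  by_cases hb2 : β ≤ 1/2
  · nlinarith [mul_pos hα hβ, mul_nonneg (by linarith : (0:ℝ) ≤ 1 - 2*β) hK0]
  · push_neg at hb2
    have hC' : α ≥ 2 - 1/β := by
      rcases hC with h | h
      · linarith
      · exact h
    have hαβ : α * β ≥ 2*β - 1 := by
      have h0 : (2 - 1/β) * β = 2*β - 1 := by field_simp
      nlinarith [mul_le_mul_of_nonneg_right hC' hβ.le]
    -- h = αβ - (2β-1)K ≥ (2β-1)(1-K) > 0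
    nlinarith [mul_pos (by linarith : (0:ℝ) < 2*β - 1)
      (by linarith : (0:ℝ) < 1 - (x*y + α*(x*(1-y) + y*(1-x))))]


lemma neg_h (α β ε : ℝ) (hα : 0 < α) (hα1 : α ≤ 1) (hβ2 : 1/2 < β) (hβ1 : β ≤ 1)
    (hε : 0 < ε) (hεh : ε ≤ 1/2) (hε8 : 8*ε ≤ 2*β - 1 - α*β) :
    (1 - 2*β) * (1 - 2*α) * (1-ε) * (1-ε/2) + α * (1 - 2*β) * ((1-ε) + (1-ε/2)) + α * β < 0 := by
  have e1 : (1 - 2*β) * (1 - 2*α) * (1-ε) * (1-ε/2) + α * (1 - 2*β) * ((1-ε) + (1-ε/2)) + α * β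
      = -(2*β - 1 - α*β) + (2*β-1) * ((1-2*α)*(3*ε/2 - ε^2/2) + α*(3*ε/2)) := by ring
  rw [e1]
  have hT : (1-2*α)*(3*ε/2 - ε^2/2) + α*(3*ε/2) ≤ 3*ε := by nlinarith
  nlinarith [mul_le_mul_of_nonneg_left hT (by linarith : (0:ℝ) ≤ 2*β-1)]

theorem stmt_11 (α₂ β₂ : ℝ) (hα : α₂ ∈ Set.Ioc (0 : ℝ) 1) (hβ : β₂ ∈ Set.Ioc (0 : ℝ) 1)
    (bV : ℝ → ℝ)
    (hbV : ∀ v : ℝ, v ∈ Set.Ico (0 : ℝ) 1 →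
      bV v = (2 * v ^ 2 - 4 * β₂ * v ^ 2 + 2 * β₂ * v) /
        (2 * v - 4 * α₂ * v + 2 * α₂)) :
    StrictMonoOn bV (Set.Ico 0 1) ↔ β₂ ≤ 1 / 2 ∨ α₂ ≥ 2 - 1 / β₂ := by
  obtain ⟨hα0, hα1⟩ := hα
  obtain ⟨hβ0, hβ1⟩ := hβ
  constructor
  · intro hmono
    by_contra hC
    push_neg at hC
    obtain ⟨hb2, ha2⟩ := hC
    have hb2' : 1/2 < β₂ := by linarith
    have hδ : 0 < 2*β₂ - 1 - α₂*β₂ := by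
      have h0 : (2 - 1/β₂) * β₂ = 2*β₂ - 1 := by field_simp
      nlinarith [mul_lt_mul_of_pos_right ha2 hβ0]
    obtain ⟨ε, hε0, hεh, hε8⟩ :
        ∃ ε : ℝ, 0 < ε ∧ ε ≤ 1/2 ∧ 8*ε ≤ 2*β₂ - 1 - α₂*β₂ := by
      refine ⟨min ((2*β₂ - 1 - α₂*β₂)/8) (1/2), lt_min (by linarith) (by norm_num),
        min_le_right _ _, ?_⟩
      have := min_le_left ((2*β₂ - 1 - α₂*β₂)/8) (1/2)
      linarith
    have hx0 : (0:ℝ) ≤ 1 - ε := by linarith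
    have hx1 : (1:ℝ) - ε < 1 := by linarith
    have hy0 : (0:ℝ) ≤ 1 - ε/2 := by linarith
    have hy1 : (1:ℝ) - ε/2 < 1 := by linarith
    have hxy : (1:ℝ) - ε < 1 - ε/2 := by linarith
    have hlt := hmono ⟨hx0, hx1⟩ ⟨hy0, hy1⟩ hxy
    rw [hbV _ ⟨hx0, hx1⟩, hbV _ ⟨hy0, hy1⟩] at hlt
    have hDx := den_pos α₂ (1-ε) hα0 hα1 hx0 hx1
    have hDy := den_pos α₂ (1-ε/2) hα0 hα1 hy0 hy1
    rw [div_lt_div_iff₀ hDx hDy] at hlt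
    have hh := neg_h α₂ β₂ ε hα0 hα1 hb2' hβ1 hε0 hεh hε8
    nlinarith [mul_pos (sub_pos.2 hxy) (neg_pos.2 hh)]
  · intro hC u hu v hv huv
    rw [hbV u hu, hbV v hv]
    have hDu := den_pos α₂ u hα0 hα1 hu.1 hu.2
    have hDv := den_pos α₂ v hα0 hα1 hv.1 hv.2
    rw [div_lt_div_iff₀ hDu hDv]
    have hkey := key_pos α₂ β₂ u v hα0 hα1 hβ0 hu.1 hv.2 huv hC
    nlinarith [mul_pos (sub_pos.2 huv) hkey]
end

section
/- Let A, B : ℝ → ℝ be differentiable functions with B(v) > 0, B'(v) > 0, A(v) > 0, A'(v) > 0 at some point v* > 0. If (A/B)'(v*) = 0 and (A/B)''(v*) ≤ 0, then (A'/B')'(v*) ≤ 0; moreover if (A/B)''(v*) < 0 then (A'/B')'(v*) < 0. -/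
/-!
At a critical point of `A / B` the quotient rule gives `A' B = A B'`. Substituting this into the
second derivative of `A / B` and into the derivative of `A' / B'` shows that both are multiples of
`A'' B - A B''`: `(A / B)'' = (A'' B - A B'') / B²` and `(A' / B')' = (A'' B - A B'') / (B B')`.
Hence `(A' / B')' = (A / B)'' · B / B'`, and the factor `B / B'` is positive.
-/

open Filter Topology

section QuotientDerivatives

variable {𝕜 : Type*} [NontriviallyNormedField 𝕜] {A B : 𝕜 → 𝕜} {v : 𝕜}

theorem deriv_mul_eq_mul_deriv_of_deriv_div_eq_zero (hA : DifferentiableAt 𝕜 A v)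
    (hB : DifferentiableAt 𝕜 B v) (hBv : B v ≠ 0)
    (hcrit : deriv (fun x => A x / B x) v = 0) :
    deriv A v * B v = A v * deriv B v := by
  rw [deriv_fun_div hA hB hBv, div_eq_zero_iff] at hcrit
  exact sub_eq_zero.mp (hcrit.resolve_right (pow_ne_zero 2 hBv))

theorem deriv_div_eventuallyEq (hA : ∀ᶠ x in 𝓝 v, DifferentiableAt 𝕜 A x)
    (hB : ∀ᶠ x in 𝓝 v, DifferentiableAt 𝕜 B x) (hBv : B v ≠ 0) :
    deriv (fun x => A x / B x) =ᶠ[𝓝 v]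
      fun x => (deriv A x * B x - A x * deriv B x) / B x ^ 2 := by
  have hBne : ∀ᶠ x in 𝓝 v, B x ≠ 0 := hB.self_of_nhds.continuousAt.eventually_ne hBv
  filter_upwards [hA, hB, hBne] with x hAx hBx hBx0
  exact deriv_fun_div hAx hBx hBx0

theorem deriv_deriv_div_of_deriv_div_eq_zero (hA : ∀ᶠ x in 𝓝 v, DifferentiableAt 𝕜 A x)
    (hB : ∀ᶠ x in 𝓝 v, DifferentiableAt 𝕜 B x) (hA' : DifferentiableAt 𝕜 (deriv A) v)
    (hB' : DifferentiableAt 𝕜 (deriv B) v) (hBv : B v ≠ 0)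
    (hcrit : deriv (fun x => A x / B x) v = 0) :
    deriv (deriv (fun x => A x / B x)) v
      = (deriv (deriv A) v * B v - A v * deriv (deriv B) v) / B v ^ 2 := by
  have hAd := hA.self_of_nhds
  have hBd := hB.self_of_nhds
  have hnum := deriv_mul_eq_mul_deriv_of_deriv_div_eq_zero hAd hBd hBv hcrit
  have hnum_deriv : deriv (fun x => deriv A x * B x - A x * deriv B x) v
      = deriv (deriv A) v * B v - A v * deriv (deriv B) v := by
    rw [deriv_fun_sub (hA'.fun_mul hBd) (hAd.fun_mul hB'), deriv_fun_mul hA' hBd,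
      deriv_fun_mul hAd hB']
    ring
  rw [(deriv_div_eventuallyEq hA hB hBv).deriv_eq,
    deriv_fun_div ((hA'.fun_mul hBd).fun_sub (hAd.fun_mul hB')) (hBd.fun_pow 2)
      (pow_ne_zero 2 hBv),
    hnum_deriv, deriv_fun_pow hBd, sub_eq_zero.mpr hnum]
  field_simp
  ring

theorem deriv_div_deriv_eq_deriv_deriv_div_mul (hA : ∀ᶠ x in 𝓝 v, DifferentiableAt 𝕜 A x)
    (hB : ∀ᶠ x in 𝓝 v, DifferentiableAt 𝕜 B x) (hA' : DifferentiableAt 𝕜 (deriv A) v)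
    (hB' : DifferentiableAt 𝕜 (deriv B) v) (hBv : B v ≠ 0) (hB'v : deriv B v ≠ 0)
    (hcrit : deriv (fun x => A x / B x) v = 0) :
    deriv (fun x => deriv A x / deriv B x) v
      = deriv (deriv (fun x => A x / B x)) v * (B v / deriv B v) := by
  have hnum := deriv_mul_eq_mul_deriv_of_deriv_div_eq_zero hA.self_of_nhds hB.self_of_nhds hBv
    hcrit
  rw [deriv_fun_div hA' hB' hB'v, deriv_deriv_div_of_deriv_div_eq_zero hA hB hA' hB' hBv hcrit]
  field_simp
  linear_combination (-deriv (deriv B) v) * hnum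

end QuotientDerivatives

theorem stmt_13_general (A B : ℝ → ℝ) (hA : ContDiff ℝ 3 A) (hB : ContDiff ℝ 3 B)
    (v : ℝ)
    (hBv : 0 < B v) (hB'v : 0 < deriv B v)
    (hfirst : deriv (fun x => A x / B x) v = 0) :
    (deriv (deriv (fun x => A x / B x)) v ≤ 0 →
      deriv (fun x => deriv A x / deriv B x) v ≤ 0) ∧
    (deriv (deriv (fun x => A x / B x)) v < 0 →
      deriv (fun x => deriv A x / deriv B x) v < 0) := by
  have hA' : Differentiable ℝ (deriv A) := (hA.of_le (by norm_num)).differentiable_deriv_two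
  have hB' : Differentiable ℝ (deriv B) := (hB.of_le (by norm_num)).differentiable_deriv_two
  have hrel := deriv_div_deriv_eq_deriv_deriv_div_mul
    (.of_forall (hA.differentiable (by norm_num))) (.of_forall (hB.differentiable (by norm_num)))
    (hA' v) (hB' v) hBv.ne' hB'v.ne' hfirst
  have hfactor : 0 < B v / deriv B v := div_pos hBv hB'v
  rw [hrel]
  exact ⟨fun h => mul_nonpos_of_nonpos_of_nonneg h hfactor.le,
    fun h => mul_neg_of_neg_of_pos h hfactor⟩

theorem stmt_13 (A B : ℝ → ℝ) (hA : ContDiff ℝ 3 A) (hB : ContDiff ℝ 3 B)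
    (v : ℝ) (hv : 0 < v)
    (hBv : 0 < B v) (hB'v : 0 < deriv B v) (hAv : 0 < A v) (hA'v : 0 < deriv A v)
    (hfirst : deriv (fun x => A x / B x) v = 0) :
    (deriv (deriv (fun x => A x / B x)) v ≤ 0 →
      deriv (fun x => deriv A x / deriv B x) v ≤ 0) ∧
    (deriv (deriv (fun x => A x / B x)) v < 0 →
      deriv (fun x => deriv A x / deriv B x) v < 0) :=
  stmt_13_general A B hA hB v hBv hB'v hfirst
end

section
/- Let β₂ ∈ (1/2, 1] and α₂ ∈ (0,1). Define N(v) = (4v - 8β₂v + 2β₂)(2v - 4α₂v + 2α₂) - (2 - 4α₂)(2v² - 4β₂v² + 2β₂v). Then N(0) > 0, N is decreasing on [0,1], and N(1) ≥ 0 if and only if α₂ ≥ 2 - 1/β₂. Consequently N(v) ≥ 0 for all v ∈ [0,1] iff α₂ ≥ 2 - 1/β₂. -/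
theorem stmt_18 (α₂ β₂ : ℝ) (hβ : β₂ ∈ Set.Ioc (1 / 2 : ℝ) 1) (hα : α₂ ∈ Set.Ioo (0 : ℝ) 1)
    (N : ℝ → ℝ)
    (hN : ∀ v : ℝ, N v = (4 * v - 8 * β₂ * v + 2 * β₂) * (2 * v - 4 * α₂ * v + 2 * α₂) -
      (2 - 4 * α₂) * (2 * v ^ 2 - 4 * β₂ * v ^ 2 + 2 * β₂ * v)) :
    0 < N 0 ∧ StrictAntiOn N (Set.Icc 0 1) ∧ (0 ≤ N 1 ↔ α₂ ≥ 2 - 1 / β₂) ∧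
      ((∀ v ∈ Set.Icc (0 : ℝ) 1, 0 ≤ N v) ↔ α₂ ≥ 2 - 1 / β₂) := by
  obtain ⟨hβ1, hβ2⟩ := hβ
  obtain ⟨hα1, hα2⟩ := hα
  have hβ0 : (0:ℝ) < β₂ := by linarith
  have hb : (0:ℝ) < 2 * β₂ - 1 := by linarith
  have hanti : StrictAntiOn N (Set.Icc 0 1) := by
    intro x hx y hy hxy
    rw [hN x, hN y]
    rcases hx with ⟨hx0, hx1⟩
    rcases hy with ⟨hy0, hy1⟩
    have hst : (0:ℝ) < 2 - (x + y) := by linarith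
    have p1 : 0 < (y - x) * (2 - (x + y)) * (α₂ * (2 * β₂ - 1)) :=
      mul_pos (mul_pos (sub_pos.mpr hxy) hst) (mul_pos hα1 hb)
    have p2 : 0 ≤ (y - x) * (x + y) * ((2 * β₂ - 1) * (1 - α₂)) :=
      mul_nonneg (mul_nonneg (sub_pos.mpr hxy).le (add_nonneg hx0 hy0))
        (mul_nonneg hb.le (by linarith))
    nlinarith [p1, p2]
  have hN1 : N 1 = 4 - 8 * β₂ + 4 * α₂ * β₂ := by rw [hN]; ring
  have hcancel : 1 / β₂ * β₂ = 1 := one_div_mul_cancel hβ0.ne'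
  have hiff : 0 ≤ N 1 ↔ α₂ ≥ 2 - 1 / β₂ := by
    rw [hN1]
    constructor
    · intro h
      rw [ge_iff_le, sub_le_iff_le_add, ← sub_nonneg]
      have : 0 ≤ (α₂ + 1 / β₂ - 2) * β₂ := by nlinarith
      nlinarith [mul_pos hβ0 hβ0]
    · intro h
      have := mul_le_mul_of_nonneg_right h hβ0.le
      nlinarith
  refine ⟨?_, hanti, hiff, ?_⟩
  · rw [hN]; nlinarith
  · constructor
    · intro h
      exact hiff.mp (h 1 ⟨by norm_num, le_refl 1⟩)
    · intro h v hv
      have h1 : 0 ≤ N 1 := hiff.mpr h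
      rcases eq_or_lt_of_le hv.2 with he | hl
      · rwa [he]
      · have := hanti hv ⟨by norm_num, le_refl 1⟩ hl
        linarith
end

section
/- Let β₂ ∈ (1/2, 1] and α₂ ∈ (0,1]. Define M(v) = ((4/3)v - (8/3)β₂v + β₂)(v - 2α₂v + 2α₂) - (1 - 2α₂)((2/3)v² - (4/3)β₂v² + β₂v). Then M(0) > 0, M is decreasing on [0,1], and M(1) ≥ 0 if and only if α₂ ≥ (2β₂ - 1)/(2 - β₂). Consequently M(v) ≥ 0 for all v ∈ [0,1] iff α₂ ≥ (2β₂-1)/(2-β₂). -/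
theorem stmt_19 (α₂ β₂ : ℝ) (hβ : β₂ ∈ Set.Ioc (1 / 2 : ℝ) 1) (hα : α₂ ∈ Set.Ioc (0 : ℝ) 1)
    (M : ℝ → ℝ)
    (hM : ∀ v : ℝ, M v = (4 / 3 * v - 8 / 3 * β₂ * v + β₂) * (v - 2 * α₂ * v + 2 * α₂) -
      (1 - 2 * α₂) * (2 / 3 * v ^ 2 - 4 / 3 * β₂ * v ^ 2 + β₂ * v)) :
    0 < M 0 ∧ StrictAntiOn M (Set.Icc 0 1) ∧ (0 ≤ M 1 ↔ α₂ ≥ (2 * β₂ - 1) / (2 - β₂)) ∧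
      ((∀ v ∈ Set.Icc (0 : ℝ) 1, 0 ≤ M v) ↔ α₂ ≥ (2 * β₂ - 1) / (2 - β₂)) := by
  obtain ⟨hβ1, hβ2⟩ := hβ
  obtain ⟨hα1, hα2⟩ := hα
  have hβ3 : (0:ℝ) < 2 - β₂ := by linarith
  have hanti : StrictAntiOn M (Set.Icc 0 1) := by
    intro x hx y hy hxy
    obtain ⟨hx0, hx1⟩ := hx
    obtain ⟨hy0, hy1⟩ := hy
    rw [hM, hM]
    nlinarith [mul_pos (sub_pos.2 hxy) hα1, mul_nonneg hx0 hy0,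
      mul_pos (sub_pos.2 hxy) (sub_pos.2 hβ1),
      mul_nonneg (mul_nonneg (sub_nonneg.2 hxy.le) (by linarith : (0:ℝ) ≤ 2*β₂-1)) (by linarith : (0:ℝ) ≤ 2 - x - y),
      mul_nonneg (mul_nonneg (sub_nonneg.2 hxy.le) (by linarith : (0:ℝ) ≤ 2*β₂-1)) (mul_nonneg hα1.le (by linarith : (0:ℝ) ≤ x + y))]
  have h1 : 0 ≤ M 1 ↔ α₂ ≥ (2 * β₂ - 1) / (2 - β₂) := by
    rw [hM, ge_iff_le, div_le_iff₀ hβ3]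
    constructor <;> intro h <;> nlinarith
  refine ⟨by rw [hM]; nlinarith, hanti, h1, ?_, ?_⟩
  · intro h
    exact h1.mp (h 1 ⟨by norm_num, le_refl 1⟩)
  · intro h v hv
    have := h1.mpr h
    rcases eq_or_lt_of_le hv.2 with h2 | h2
    · rwa [h2]
    · have := hanti hv (by constructor <;> norm_num) h2
      linarith
end
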